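/- Let Sch be a schema whose constraints are inclusion dependencies and which has result-bounded access methods. If a CQ Q has a monotone plan answering it with respect to Sch (equivalently, is AMonDet), then Q has a monotone plan answering it with respect to the existence-check simplification of Sch: the schema where each result-bounded method mt on relation R with input positions x⃗ is replaced by a Boolean method on a new relation R_mt(x⃗) with no result bound, together with the inclusion dependencies R(x⃗, y⃗) → R_mt(x⃗) and R_mt(x⃗) → ∃y⃗ R(x⃗, y⃗). -/

import Mathlib

/-! Given instances `I₁`, `I₂` of the simplified schema with a common part `Iacc` that is
access-valid in `I₁`, chase `Iacc` with the original IDs, the IDs `R_mt(x⃗) → ∃ y⃗ R(x⃗, y⃗)`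
and the copy IDs `R(x⃗, y⃗) → ∃ y⃗' R(x⃗, y⃗')`, firing every trigger infinitely often with
fresh nulls; add the chase to both `Iᵢ` and forget the relations `R_mt`. IDs have
single-fact triggers and are preserved under unions, so both new instances satisfy the
original IDs. The chase is access-valid in the first one: unbounded accesses are answered as
in `I₁`, and a result-bounded access with some match has a match in the chase (through
`R_mt`), hence infinitely many copies of it there, among which any allowed number of outputs
can be chosen. Since `I₂` satisfies all the chased IDs and contains `Iacc`, the chase maps
homomorphically into `I₂`, so `Q` transfers from the second new instance back to `I₂`. -/

/-- A relational signature: a type of relation symbols with arities. -/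
structure RelSig where
  Rel : Type
  ar : Rel → ℕ

/-- A fact over signature `S` with domain `D`. -/
abbrev DBFact (S : RelSig) (D : Type) := Σ R : S.Rel, Fin (S.ar R) → D

/-- An instance: a set of facts. -/
abbrev DBInst (S : RelSig) (D : Type) := Set (DBFact S D)

/-- The active domain of an instance. -/
def adom {S : RelSig} {D : Type} (I : DBInst S D) : Set D :=
  {d | ∃ f ∈ I, ∃ i, f.2 i = d}

/-- A Boolean conjunctive query over `S`: finitely many atoms over
variables `Fin nv` (all existentially quantified). -/
structure CQ (S : RelSig) where
  nv : ℕ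
  atoms : Finset ((R : S.Rel) × (Fin (S.ar R) → Fin nv))

/-- A Boolean CQ holds in an instance iff there is a homomorphism from its
canonical database into the instance. -/
def CQ.holds {S : RelSig} {D : Type} (Q : CQ S) (I : DBInst S D) : Prop :=
  ∃ h : Fin Q.nv → D, ∀ a ∈ Q.atoms, (⟨a.1, fun i => h (a.2 i)⟩ : DBFact S D) ∈ I

/-- `h` is a homomorphism from `J` to `I`. -/
def IsHom {S : RelSig} {D E : Type} (h : D → E) (J : DBInst S D) (I : DBInst S E) : Prop :=
  ∀ f ∈ J, (⟨f.1, fun i => h (f.2 i)⟩ : DBFact S E) ∈ I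

/-- The blowup of an instance: each element `a` is replaced by countably many
copies `(a, j)` (with `(a, 0)` playing the role of `a` itself), each fact by
all coordinatewise copies. -/
def Blowup {S : RelSig} {D : Type} (I : DBInst S D) : DBInst S (D × ℕ) :=
  { f | ∃ (a : Fin (S.ar f.1) → D) (k : Fin (S.ar f.1) → ℕ),
      (⟨f.1, a⟩ : DBFact S D) ∈ I ∧ f.2 = fun i => (a i, k i) }

/-- An access method: relation, (finite) set of input positions, optional
result bound. -/
structure Method (S : RelSig) where
  rel : S.Rel
  input : Finset (Fin (S.ar rel))
  bound : Option ℕ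

/-- `X` contains at least `j` elements. -/
def AtLeast {α : Type _} (X : Set α) (j : ℕ) : Prop :=
  ∃ T : Finset α, ↑T ⊆ X ∧ T.card = j

/-- Matching tuples of the access `(mt, b)` on `I`. -/
def matchTuples {S : RelSig} {D : Type} (mt : Method S) (b : Fin (S.ar mt.rel) → D)
    (I : DBInst S D) : Set (Fin (S.ar mt.rel) → D) :=
  {args | (⟨mt.rel, args⟩ : DBFact S D) ∈ I ∧ ∀ i ∈ mt.input, args i = b i}

/-- Valid outputs of an access with matching tuples `M` (result bounds give
both a lower and an upper bound on the returned tuples). -/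
def ValidOutput {S : RelSig} {D : Type} (mt : Method S)
    (M J : Set (Fin (S.ar mt.rel) → D)) : Prop :=
  J ⊆ M ∧
    match mt.bound with
    | none => J = M
    | some k => (∀ j ≤ k, AtLeast M j → AtLeast J j) ∧ ¬ AtLeast J (k + 1)

/-- `Iacc` is access-valid in `I1`. -/
def AccessValid {S : RelSig} {D : Type} (Ms : Set (Method S))
    (Iacc I1 : DBInst S D) : Prop :=
  ∀ mt ∈ Ms, ∀ b : Fin (S.ar mt.rel) → D, (∀ i ∈ mt.input, b i ∈ adom Iacc) →
    ∃ J, ValidOutput mt (matchTuples mt b I1) J ∧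
      ∀ args ∈ J, (⟨mt.rel, args⟩ : DBFact S D) ∈ Iacc

/-- Access monotonic-determinacy, the characterization of monotone
answerability. -/
def AMonDet {S : RelSig} (Ms : Set (Method S))
    (C : ∀ D : Type, DBInst S D → Prop) (Q : CQ S) : Prop :=
  ∀ (D : Type) (I1 I2 : DBInst S D), C D I1 → C D I2 →
    (∃ Iacc, Iacc ⊆ I1 ∧ Iacc ⊆ I2 ∧ AccessValid Ms Iacc I1) →
    Q.holds I1 → Q.holds I2

/-- An inclusion dependency (single body atom, single head atom, no
repeated variables). -/
structure IncDep (S : RelSig) where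
  body : S.Rel
  head : S.Rel
  width : ℕ
  bpos : Fin width → Fin (S.ar body)
  hpos : Fin width → Fin (S.ar head)
  bpos_inj : Function.Injective bpos
  hpos_inj : Function.Injective hpos

/-- Satisfaction of an inclusion dependency. -/
def IncDep.Sat {S : RelSig} {D : Type} (δ : IncDep S) (I : DBInst S D) : Prop :=
  ∀ args : Fin (S.ar δ.body) → D, (⟨δ.body, args⟩ : DBFact S D) ∈ I →
    ∃ args' : Fin (S.ar δ.head) → D, (⟨δ.head, args'⟩ : DBFact S D) ∈ I ∧
      ∀ t, args' (δ.hpos t) = args (δ.bpos t)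

section Simplification

variable (S : RelSig) (Ms : Set (Method S))

/-- The result-bounded methods of the schema; each gives rise to a new
relation `R_mt` in the simplification. -/
abbrev BddMeth : Type := {mt : Method S // mt ∈ Ms ∧ mt.bound ≠ none}

/-- The signature of the existence-check simplification: the original
relations plus, for each result-bounded method `mt`, a relation `R_mt`
whose arity is the number of input positions of `mt`. -/
def simpSig : RelSig :=
  ⟨S.Rel ⊕ BddMeth S Ms, Sum.elim S.ar (fun b => b.1.input.card)⟩

/-- Lifting the original inclusion dependencies to the enlarged signature. -/
def liftID (δ : IncDep S) : IncDep (simpSig S Ms) where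
  body := Sum.inl δ.body
  head := Sum.inl δ.head
  width := δ.width
  bpos := δ.bpos
  hpos := δ.hpos
  bpos_inj := δ.bpos_inj
  hpos_inj := δ.hpos_inj

/-- The inclusion dependency `R(x⃗, y⃗) → R_mt(x⃗)`. -/
def toViewID (b : BddMeth S Ms) : IncDep (simpSig S Ms) where
  body := Sum.inl b.1.rel
  head := Sum.inr b
  width := b.1.input.card
  bpos := fun t => ((b.1.input.orderIsoOfFin rfl) t).val
  hpos := fun t => t
  bpos_inj := fun s t h => (b.1.input.orderIsoOfFin rfl).injective (Subtype.ext h)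
  hpos_inj := fun _ _ h => h

/-- The inclusion dependency `R_mt(x⃗) → ∃ y⃗ R(x⃗, y⃗)`. -/
def viewToRelID (b : BddMeth S Ms) : IncDep (simpSig S Ms) where
  body := Sum.inr b
  head := Sum.inl b.1.rel
  width := b.1.input.card
  bpos := fun t => t
  hpos := fun t => ((b.1.input.orderIsoOfFin rfl) t).val
  bpos_inj := fun _ _ h => h
  hpos_inj := fun s t h => (b.1.input.orderIsoOfFin rfl).injective (Subtype.ext h)

/-- A non-result-bounded method of the original schema, carried over. -/
def liftMethod (mt : Method S) : Method (simpSig S Ms) where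
  rel := Sum.inl mt.rel
  input := mt.input
  bound := none

/-- The Boolean method (all positions are inputs, no result bound) on the
new relation `R_mt`. -/
def boolMethod (b : BddMeth S Ms) : Method (simpSig S Ms) where
  rel := Sum.inr b
  input := Finset.univ
  bound := none

/-- The methods of the existence-check simplification. -/
def simpMethods : Set (Method (simpSig S Ms)) :=
  {m | ∃ mt ∈ Ms, mt.bound = none ∧ m = liftMethod S Ms mt} ∪
    {m | ∃ b : BddMeth S Ms, m = boolMethod S Ms b}

/-- The constraints of the existence-check simplification: the original IDs
plus the to-view and view-to-relation IDs for each result-bounded method. -/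
def simpConstraints (Sid : Set (IncDep S)) (I : DBInst (simpSig S Ms) D) : Prop :=
  (∀ δ ∈ Sid, (liftID S Ms δ).Sat I) ∧
    ∀ b : BddMeth S Ms, (toViewID S Ms b).Sat I ∧ (viewToRelID S Ms b).Sat I

/-- A CQ over the original signature, viewed over the enlarged signature. -/
noncomputable def liftCQ (Q : CQ S) : CQ (simpSig S Ms) :=
  letI := Classical.decEq ((R : (simpSig S Ms).Rel) × (Fin ((simpSig S Ms).ar R) → Fin Q.nv))
  ⟨Q.nv, Q.atoms.image (fun a => ⟨Sum.inl a.1, a.2⟩)⟩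

end Simplification

section Chase

variable {T : RelSig} {D E : Type}

def DBInst.map (φ : D → E) (I : DBInst T D) : DBInst T E :=
  {f | ∃ a, (⟨f.1, a⟩ : DBFact T D) ∈ I ∧ f.2 = fun i => φ (a i)}

theorem isHom_map (φ : D → E) (I : DBInst T D) : IsHom φ I (I.map φ) :=
  fun f hf => ⟨f.2, hf, rfl⟩

theorem CQ.holds.of_isHom {Q : CQ T} {I : DBInst T D} {J : DBInst T E} {φ : D → E}
    (hQ : Q.holds I) (hφ : IsHom φ I J) : Q.holds J := by
  obtain ⟨ν, hν⟩ := hQ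
  exact ⟨fun x => φ (ν x), fun a ha => hφ _ (hν a ha)⟩

theorem CQ.holds.mono {Q : CQ T} {I J : DBInst T D} (hQ : Q.holds I) (hIJ : I ⊆ J) :
    Q.holds J :=
  hQ.of_isHom (φ := id) fun _ hf => hIJ hf

theorem CQ.holds_of_holds_map_some {Q : CQ T} {I : DBInst T D} (hQ : Q.holds (I.map some))
    (ν₀ : Fin Q.nv → D) : Q.holds I := by
  obtain ⟨ν, hν⟩ := hQ
  refine ⟨fun x => (ν x).getD (ν₀ x), fun a ha => ?_⟩
  obtain ⟨b, hb, hνb⟩ := hν a ha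
  dsimp only at hνb
  have : (fun i => (ν (a.2 i)).getD (ν₀ (a.2 i))) = b := by
    funext i
    rw [congrFun hνb i]
    rfl
  rwa [this]

theorem IncDep.Sat.union {δ : IncDep T} {I J : DBInst T D} (hI : δ.Sat I) (hJ : δ.Sat J) :
    δ.Sat (I ∪ J) := by
  rintro a (ha | ha)
  · obtain ⟨a', ha', h⟩ := hI a ha
    exact ⟨a', .inl ha', h⟩
  · obtain ⟨a', ha', h⟩ := hJ a ha
    exact ⟨a', .inr ha', h⟩

theorem IncDep.Sat.map {δ : IncDep T} {I : DBInst T D} (hI : δ.Sat I) (φ : D → E) :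
    δ.Sat (I.map φ) := by
  rintro args ⟨a, ha, hargs⟩
  obtain ⟨a', ha', h⟩ := hI a ha
  dsimp only at hargs
  exact ⟨fun i => φ (a' i), ⟨a', ha', rfl⟩, fun t => by simp only [hargs, h t]⟩

/-- Skolem terms: `null δ args n i` is position `i` of the `n`-th fresh witness that the chase
creates for the trigger `args` of `δ`. -/
inductive Term (T : RelSig) (D : Type) : Type where
  | base : D → Term T D
  | null (δ : IncDep T) (args : Fin (T.ar δ.body) → Term T D) (n : ℕ)
      (i : Fin (T.ar δ.head)) : Term T D

open Classical in
noncomputable def IncDep.witness (δ : IncDep T) (args : Fin (T.ar δ.body) → Term T D)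
    (n : ℕ) : Fin (T.ar δ.head) → Term T D := fun i =>
  if h : ∃ t, δ.hpos t = i then args (δ.bpos h.choose) else .null δ args n i

theorem IncDep.witness_hpos (δ : IncDep T) (args : Fin (T.ar δ.body) → Term T D) (n : ℕ)
    (t : Fin δ.width) : δ.witness args n (δ.hpos t) = args (δ.bpos t) := by
  have h : ∃ t', δ.hpos t' = δ.hpos t := ⟨t, rfl⟩
  simp only [IncDep.witness, dif_pos h, δ.hpos_inj h.choose_spec]

theorem IncDep.witness_of_forall_ne (δ : IncDep T) (args : Fin (T.ar δ.body) → Term T D)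
    (n : ℕ) {i : Fin (T.ar δ.head)} (hi : ∀ t, δ.hpos t ≠ i) :
    δ.witness args n i = .null δ args n i :=
  dif_neg (not_exists.2 hi)

inductive Chase (Γ : Set (IncDep T)) (I : DBInst T D) : DBInst T (Term T D) where
  | base {f : DBFact T D} : f ∈ I → Chase Γ I ⟨f.1, fun i => .base (f.2 i)⟩
  | step {δ : IncDep T} (hδ : δ ∈ Γ) {args : Fin (T.ar δ.body) → Term T D} (n : ℕ) :
      Chase Γ I ⟨δ.body, args⟩ → Chase Γ I ⟨δ.head, δ.witness args n⟩

variable {Γ : Set (IncDep T)} {I J : DBInst T D}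

theorem IncDep.sat_chase {δ : IncDep T} (hδ : δ ∈ Γ) : δ.Sat (Chase Γ I) :=
  fun args h => ⟨δ.witness args 0, Chase.step hδ 0 h, δ.witness_hpos args 0⟩

theorem mem_adom_of_base_mem_adom_chase {d : D} (h : Term.base d ∈ adom (Chase Γ I)) :
    d ∈ adom I := by
  obtain ⟨f, hf, i, hi⟩ := h
  change Chase Γ I f at hf
  induction hf with
  | base hf => exact ⟨_, hf, i, Term.base.inj hi⟩
  | @step δ _ args n _ ih =>
    dsimp only at i hi ih
    by_cases hrange : ∃ t, δ.hpos t = i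
    · obtain ⟨t, rfl⟩ := hrange
      exact ih _ ((δ.witness_hpos args n t).symm.trans hi)
    · rw [δ.witness_of_forall_ne args n (not_exists.1 hrange)] at hi
      cases hi

open Classical in
/-- Interprets the chase in a model `J`: a null goes to the matching entry of a chosen witness
in `J` for the image of the trigger that created it. -/
noncomputable def Term.eval (J : DBInst T D) : Term T D → Option D
  | .base d => some d
  | .null δ args _ i =>
    if h : ∃ a : Fin (T.ar δ.head) → D, (⟨δ.head, a⟩ : DBFact T D) ∈ J ∧
        ∀ t, some (a (δ.hpos t)) = eval J (args (δ.bpos t)) then some (h.choose i) else none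

theorem isHom_eval_chase (hIJ : I ⊆ J) (hJ : ∀ δ ∈ Γ, δ.Sat J) :
    IsHom (Term.eval J) (Chase Γ I) (J.map some) := by
  intro f hf
  induction hf with
  | base hf => exact ⟨_, hIJ hf, rfl⟩
  | @step δ hδ args n _ ih =>
    obtain ⟨a, ha, hargs⟩ := ih
    dsimp only at a ha hargs ⊢
    have hex : ∃ a' : Fin (T.ar δ.head) → D, (⟨δ.head, a'⟩ : DBFact T D) ∈ J ∧
        ∀ t, some (a' (δ.hpos t)) = Term.eval J (args (δ.bpos t)) := by
      obtain ⟨a', ha', h⟩ := hJ δ hδ a ha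
      exact ⟨a', ha', fun t => by rw [h t]; exact (congrFun hargs _).symm⟩
    refine ⟨hex.choose, hex.choose_spec.1, funext fun i => ?_⟩
    dsimp only at i ⊢
    by_cases hrange : ∃ t, δ.hpos t = i
    · obtain ⟨t, rfl⟩ := hrange
      rw [δ.witness_hpos]
      exact (hex.choose_spec.2 t).symm
    · rw [δ.witness_of_forall_ne args n (not_exists.1 hrange)]
      exact dif_pos hex

end Chase

theorem Finset.exists_orderIsoOfFin_eq_iff {m : ℕ} (s : Finset (Fin m)) (i : Fin m) :
    (∃ t, ((s.orderIsoOfFin rfl t : s) : Fin m) = i) ↔ i ∈ s := by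
  refine ⟨fun ⟨t, ht⟩ => ht ▸ (s.orderIsoOfFin rfl t).2, fun hi => ?_⟩
  exact ⟨(s.orderIsoOfFin rfl).symm ⟨i, hi⟩, by rw [OrderIso.apply_symm_apply]⟩

section Access

variable {T : RelSig} {D : Type}

/-- The ID `R(x⃗, y⃗) → ∃ y⃗' R(x⃗, y⃗')`, with `x⃗` the input positions of `mt`. -/
def Method.copyID (mt : Method T) : IncDep T where
  body := mt.rel
  head := mt.rel
  width := mt.input.card
  bpos t := mt.input.orderIsoOfFin rfl t
  hpos t := mt.input.orderIsoOfFin rfl t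
  bpos_inj _ _ h := (mt.input.orderIsoOfFin rfl).injective (Subtype.ext h)
  hpos_inj _ _ h := (mt.input.orderIsoOfFin rfl).injective (Subtype.ext h)

theorem Method.copyID_sat (mt : Method T) (I : DBInst T D) : mt.copyID.Sat I :=
  fun a ha => ⟨a, ha, fun _ => rfl⟩

theorem Method.witness_copyID_of_mem (mt : Method T) (args : Fin (T.ar mt.rel) → Term T D)
    (n : ℕ) {i : Fin (T.ar mt.rel)} (hi : i ∈ mt.input) :
    mt.copyID.witness args n i = args i := by
  obtain ⟨t, rfl⟩ := (mt.input.exists_orderIsoOfFin_eq_iff i).2 hi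
  exact mt.copyID.witness_hpos args n t

theorem Method.witness_copyID_of_notMem (mt : Method T) (args : Fin (T.ar mt.rel) → Term T D)
    (n : ℕ) {i : Fin (T.ar mt.rel)} (hi : i ∉ mt.input) :
    mt.copyID.witness args n i = .null mt.copyID args n i :=
  mt.copyID.witness_of_forall_ne args n fun t ht =>
    hi ((mt.input.exists_orderIsoOfFin_eq_iff i).1 ⟨t, ht⟩)

theorem matchTuples_mono (mt : Method T) (b : Fin (T.ar mt.rel) → D) {I J : DBInst T D}
    (hIJ : I ⊆ J) : matchTuples mt b I ⊆ matchTuples mt b J :=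
  fun _ ⟨h, hb⟩ => ⟨hIJ h, hb⟩

theorem ValidOutput.of_bound_none {mt : Method T} (hk : mt.bound = none)
    (M : Set (Fin (T.ar mt.rel) → D)) : ValidOutput mt M M := by
  simp only [ValidOutput, hk, subset_rfl, and_self]

theorem exists_validOutput_of_bound_some {mt : Method T} {k : ℕ} (hk : mt.bound = some k)
    {M N : Set (Fin (T.ar mt.rel) → D)} (hNM : N ⊆ M) (hN : N.Infinite ∨ N = M) :
    ∃ J ⊆ N, ValidOutput mt M J := by
  suffices ∃ J : Finset (Fin (T.ar mt.rel) → D),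
      ↑J ⊆ N ∧ J.card ≤ k ∧ ∀ j ≤ k, AtLeast M j → j ≤ J.card by
    obtain ⟨J, hJN, hJk, hMJ⟩ := this
    refine ⟨J, hJN, hJN.trans hNM, ?_⟩
    simp only [hk]
    refine ⟨fun j hj hM => ?_, fun ⟨J', hJ', hc⟩ => ?_⟩
    · obtain ⟨J', hJ', hc⟩ := Finset.exists_subset_card_eq (hMJ j hj hM)
      exact ⟨J', by exact_mod_cast hJ', hc⟩
    · have := Finset.card_le_card (show J' ⊆ J by exact_mod_cast hJ')
      omega
  by_cases hinf : N.Infinite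
  · obtain ⟨J, hJN, hJ⟩ := hinf.exists_subset_card_eq k
    exact ⟨J, hJN, hJ.le, fun j hj _ => hJ ▸ hj⟩
  · have hfin := Set.not_infinite.1 hinf
    obtain ⟨J, hJN, hJ⟩ := Finset.exists_subset_card_eq (min_le_right k hfin.toFinset.card)
    refine ⟨J, fun x hx => hfin.mem_toFinset.1 (hJN hx), hJ ▸ min_le_left _ _,
      fun j hj ⟨J', hJ', hc⟩ => hJ ▸ le_min hj (hc ▸ Finset.card_le_card fun x hx => ?_)⟩
    exact hfin.mem_toFinset.2 ((hN.resolve_left hinf).symm ▸ hJ' hx)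

theorem AccessValid.mem_of_bound_none {Ms : Set (Method T)} {Iacc I : DBInst T D}
    (hAV : AccessValid Ms Iacc I) {mt : Method T} (hmt : mt ∈ Ms) (hk : mt.bound = none)
    {a : Fin (T.ar mt.rel) → D} (ha : ⟨mt.rel, a⟩ ∈ I)
    (hacc : ∀ i ∈ mt.input, a i ∈ adom Iacc) :
    ⟨mt.rel, a⟩ ∈ Iacc := by
  obtain ⟨J, ⟨-, hJ⟩, hJacc⟩ := hAV mt hmt a hacc
  simp only [hk] at hJ
  exact hJacc a (hJ ▸ ⟨ha, fun _ _ => rfl⟩)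

end Access

section ExistenceCheck

variable {S : RelSig} {Ms : Set (Method S)} {D E : Type}

def origPart (I : DBInst (simpSig S Ms) E) : DBInst S E :=
  {f | (⟨Sum.inl f.1, f.2⟩ : DBFact (simpSig S Ms) E) ∈ I}

theorem origPart_mono {I J : DBInst (simpSig S Ms) E} (hIJ : I ⊆ J) : origPart I ⊆ origPart J :=
  fun _ hf => hIJ hf

theorem adom_origPart_subset (I : DBInst (simpSig S Ms) E) : adom (origPart I) ⊆ adom I :=
  fun _ ⟨_, hf, i, hi⟩ => ⟨_, hf, i, hi⟩

theorem IncDep.Sat.origPart {δ : IncDep S} {I : DBInst (simpSig S Ms) E}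
    (h : (liftID S Ms δ).Sat I) : δ.Sat (origPart I) :=
  h

theorem mem_adom_of_base_mem_adom_origPart_chase {Γ : Set (IncDep (simpSig S Ms))}
    {I : DBInst (simpSig S Ms) D} {d : D}
    (h : Term.base d ∈ adom (origPart (Chase Γ I))) : d ∈ adom I :=
  mem_adom_of_base_mem_adom_chase (adom_origPart_subset _ h)

theorem liftCQ_holds_iff {Q : CQ S} {I : DBInst (simpSig S Ms) E} :
    (liftCQ S Ms Q).holds I ↔ Q.holds (origPart I) := by
  refine ⟨fun ⟨ν, hν⟩ => ⟨ν, fun a ha => hν ⟨Sum.inl a.1, a.2⟩ ?_⟩,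
    fun ⟨ν, hν⟩ => ⟨ν, fun A hA => ?_⟩⟩
  · exact (@Finset.mem_image _ _ (Classical.decEq _) _ _ _).2 ⟨a, ha, rfl⟩
  · obtain ⟨a, ha, rfl⟩ := (@Finset.mem_image _ _ (Classical.decEq _) _ _ _).1 hA
    exact hν a ha

/-- The IDs chased to build the accessible part of the original schema; the copy IDs, valid in
every instance, make every result-bounded access to the chase have infinitely many answers. -/
def simpChaseIDs (Sid : Set (IncDep S)) : Set (IncDep (simpSig S Ms)) :=
  liftID S Ms '' Sid ∪ Set.range (viewToRelID S Ms) ∪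
    Set.range fun b : BddMeth S Ms => (liftMethod S Ms b.1).copyID

variable {Sid : Set (IncDep S)}

theorem sat_simpChaseIDs {I : DBInst (simpSig S Ms) D} (hI : simpConstraints S Ms Sid I) :
    ∀ δ ∈ simpChaseIDs Sid, δ.Sat I := by
  rintro _ ((⟨δ, hδ, rfl⟩ | ⟨b, rfl⟩) | ⟨b, rfl⟩)
  · exact hI.1 δ hδ
  · exact (hI.2 b).2
  · exact Method.copyID_sat _ I

def unionChase (Sid : Set (IncDep S)) (Iacc I : DBInst (simpSig S Ms) D) :
    DBInst S (Term (simpSig S Ms) D) :=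
  origPart (I.map .base ∪ Chase (simpChaseIDs Sid) Iacc)

variable {Iacc I : DBInst (simpSig S Ms) D}

theorem sat_unionChase (hI : simpConstraints S Ms Sid I) :
    ∀ δ ∈ Sid, δ.Sat (unionChase Sid Iacc I) := fun δ hδ =>
  (((hI.1 δ hδ).map _).union (IncDep.sat_chase (.inl (.inl ⟨δ, hδ, rfl⟩)))).origPart

theorem holds_unionChase {Q : CQ S} (hQ : (liftCQ S Ms Q).holds I) :
    Q.holds (unionChase Sid Iacc I) :=
  liftCQ_holds_iff.1 ((hQ.of_isHom (isHom_map .base I)).mono Set.subset_union_left)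

theorem liftCQ_holds_of_holds_unionChase {Q : CQ S} (hsub : Iacc ⊆ I)
    (hI : simpConstraints S Ms Sid I) (hQ : Q.holds (unionChase Sid Iacc I))
    (ν₀ : Fin Q.nv → D) : (liftCQ S Ms Q).holds I := by
  refine CQ.holds_of_holds_map_some ((liftCQ_holds_iff.2 hQ).of_isHom
    (φ := Term.eval I) ?_) ν₀
  rintro f (⟨a, ha, hf⟩ | hf)
  · exact ⟨a, ha, by rw [hf]; rfl⟩
  · exact isHom_eval_chase hsub (sat_simpChaseIDs hI) f hf

theorem mem_chase_of_bound_none (hAV : AccessValid (simpMethods S Ms) Iacc I) {mt : Method S}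
    (hmt : mt ∈ Ms) (hk : mt.bound = none) {t : Fin (S.ar mt.rel) → Term (simpSig S Ms) D}
    (ht : ⟨mt.rel, t⟩ ∈ unionChase Sid Iacc I)
    (hacc : ∀ i ∈ mt.input, t i ∈ adom (origPart (Chase (simpChaseIDs Sid) Iacc))) :
    ⟨mt.rel, t⟩ ∈ origPart (Chase (simpChaseIDs Sid) Iacc) := by
  rcases ht with ⟨a, ha, hta⟩ | ht
  · dsimp only at a ha hta
    subst hta
    exact Chase.base (hAV.mem_of_bound_none (mt := liftMethod S Ms mt) (.inl ⟨mt, hmt, hk, rfl⟩)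
      rfl ha fun i hi => mem_adom_of_base_mem_adom_origPart_chase (hacc i hi))
  · exact ht

/-- The match in the chase is obtained through the existence check on `R_mt`. -/
theorem exists_chase_match (hI : simpConstraints S Ms Sid I)
    (hAV : AccessValid (simpMethods S Ms) Iacc I) (b : BddMeth S Ms)
    {t : Fin (S.ar b.1.rel) → Term (simpSig S Ms) D}
    (ht : ⟨b.1.rel, t⟩ ∈ unionChase Sid Iacc I)
    (hacc : ∀ i ∈ b.1.input, t i ∈ adom (origPart (Chase (simpChaseIDs Sid) Iacc))) :
    ∃ t', ⟨b.1.rel, t'⟩ ∈ origPart (Chase (simpChaseIDs Sid) Iacc) ∧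
      ∀ i ∈ b.1.input, t' i = t i := by
  rcases ht with ⟨a, ha, hta⟩ | ht
  swap
  · exact ⟨t, ht, fun _ _ => rfl⟩
  dsimp only at a ha hta
  subst hta
  obtain ⟨v, hv, hva⟩ := (hI.2 b).1 a ha
  have hvacc : ⟨Sum.inr b, v⟩ ∈ Iacc :=
    hAV.mem_of_bound_none (mt := boolMethod S Ms b) (.inr ⟨b, rfl⟩) rfl hv fun s _ => by
      have hvs : v s = a (b.1.input.orderIsoOfFin rfl s).1 := hva s
      rw [hvs]
      exact mem_adom_of_base_mem_adom_origPart_chase (hacc _ (b.1.input.orderIsoOfFin rfl s).2)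
  refine ⟨(viewToRelID S Ms b).witness (fun s => .base (v s)) 0,
    Chase.step (δ := viewToRelID S Ms b) (args := fun s => .base (v s))
      (Or.inl (Or.inr ⟨b, rfl⟩)) 0 (Chase.base hvacc), fun i hi => ?_⟩
  obtain ⟨s, rfl⟩ := (b.1.input.exists_orderIsoOfFin_eq_iff i).2 hi
  exact ((viewToRelID S Ms b).witness_hpos _ 0 s).trans (congrArg Term.base (hva s))

theorem matchTuples_chase_infinite_or_eq (hI : simpConstraints S Ms Sid I)
    (hAV : AccessValid (simpMethods S Ms) Iacc I) (b : BddMeth S Ms)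
    (bv : Fin (S.ar b.1.rel) → Term (simpSig S Ms) D)
    (hbv : ∀ i ∈ b.1.input, bv i ∈ adom (origPart (Chase (simpChaseIDs Sid) Iacc))) :
    (matchTuples b.1 bv (origPart (Chase (simpChaseIDs Sid) Iacc))).Infinite ∨
      matchTuples b.1 bv (origPart (Chase (simpChaseIDs Sid) Iacc)) =
        matchTuples b.1 bv (unionChase Sid Iacc I) := by
  by_cases hsub : matchTuples b.1 bv (unionChase Sid Iacc I) ⊆
      matchTuples b.1 bv (origPart (Chase (simpChaseIDs Sid) Iacc))
  · exact .inr ((matchTuples_mono _ _ (origPart_mono Set.subset_union_right)).antisymm hsub)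
  obtain ⟨t, ⟨ht, htbv⟩, htC⟩ := Set.not_subset.1 hsub
  obtain ⟨t', ht', htt'⟩ := exists_chase_match hI hAV b ht fun i hi => htbv i hi ▸ hbv i hi
  obtain ⟨i₀, hi₀⟩ : ∃ i₀, t' i₀ ≠ t i₀ := by
    by_contra! h
    obtain rfl : t' = t := funext h
    exact htC ⟨ht', htbv⟩
  have hi₀ : i₀ ∉ b.1.input := fun hi => hi₀ (htt' i₀ hi)
  refine .inl (Set.infinite_of_injective_forall_mem
    (f := fun n => (liftMethod S Ms b.1).copyID.witness t' n) ?_ fun n => ?_)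
  · intro n m h
    have := congrFun h i₀
    dsimp only at this
    rw [Method.witness_copyID_of_notMem (liftMethod S Ms b.1) t' _ hi₀,
      Method.witness_copyID_of_notMem (liftMethod S Ms b.1) t' _ hi₀] at this
    exact (Term.null.inj this).2.2.1
  · refine ⟨Chase.step (δ := (liftMethod S Ms b.1).copyID) (args := t') (Or.inr ⟨b, rfl⟩) n
      ht', fun i hi => ?_⟩
    rw [Method.witness_copyID_of_mem (liftMethod S Ms b.1) t' _ hi, htt' i hi, htbv i hi]

theorem accessValid_unionChase (hI : simpConstraints S Ms Sid I)
    (hAV : AccessValid (simpMethods S Ms) Iacc I) :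
    AccessValid Ms (origPart (Chase (simpChaseIDs Sid) Iacc)) (unionChase Sid Iacc I) := by
  intro mt hmt bv hbv
  cases hk : mt.bound with
  | none => exact ⟨_, .of_bound_none hk _, fun t ht =>
      mem_chase_of_bound_none hAV hmt hk ht.1 fun i hi => ht.2 i hi ▸ hbv i hi⟩
  | some k =>
    obtain ⟨J, hJ, hvalid⟩ := exists_validOutput_of_bound_some hk
      (matchTuples_mono _ _ (origPart_mono Set.subset_union_right))
      (matchTuples_chase_infinite_or_eq hI hAV ⟨mt, hmt, by simp [hk]⟩ bv hbv)
    exact ⟨J, hvalid, fun t ht => (hJ ht).1⟩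

end ExistenceCheck

/-- If the constraints are inclusion dependencies and the
CQ `Q` is monotone answerable (equivalently, `AMonDet`) with respect to the
original schema, then `Q` is monotone answerable with respect to the
existence-check simplification. -/
theorem stmt11 (S : RelSig) (Sid : Set (IncDep S)) (Ms : Set (Method S)) (Q : CQ S)
    (h : AMonDet Ms (fun _ I => ∀ δ ∈ Sid, δ.Sat I) Q) :
    AMonDet (simpMethods S Ms) (fun _ I => simpConstraints S Ms Sid I)
      (liftCQ S Ms Q) := by
  rintro D I₁ I₂ hI₁ hI₂ ⟨Iacc, -, hsub₂, hAV⟩ hQ₁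
  have hQ₂ : Q.holds (unionChase Sid Iacc I₂) :=
    h _ _ _ (sat_unionChase hI₁) (sat_unionChase hI₂)
      ⟨_, origPart_mono Set.subset_union_right, origPart_mono Set.subset_union_right,
        accessValid_unionChase hI₁ hAV⟩
      (holds_unionChase hQ₁)
  exact liftCQ_holds_of_holds_unionChase hsub₂ hI₂ hQ₂ hQ₁.choose
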